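/- Fix s ∈ {0,1,...,K}. For any two vectors b, b' ∈ ℝ^k such that both M‖b‖₂ and M‖b'‖₂ lie in the half-open interval [S_λ̄(|U_(s+1)|), S_λ̄(|U_(s)|)), one has F(b) − F_s(b) = F(b') − F_s(b'); that is, F − F_s is constant on the shell {b : M‖b‖₂ ∈ [S_λ̄(|U_(s+1)|), S_λ̄(|U_(s)|))}. -/
import Mathlib


/-- Soft-thresholding operator `S_t(x) = sign(x) · max(|x| − t, 0)`. -/
noncomputable def st (t x : ℝ) : ℝ := Real.sign x * max (|x| - t) 0

/-- Euclidean (ℓ₂) norm on `ℝ^n`. -/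
noncomputable def l2 {n : ℕ} (x : Fin n → ℝ) : ℝ := Real.sqrt (∑ i, (x i) ^ 2)

/-- ℓ₁ norm on `ℝ^n`. -/
noncomputable def l1 {n : ℕ} (x : Fin n → ℝ) : ℝ := ∑ i, |x i|

/-- `du U σ s = |U_(s)|`, the `s`-th largest absolute entry of `U` (1-based, via a sorting
permutation `σ`), with the out-of-range convention `|U_(s)| = 0` for `s > K`
(so that `S_λ̄(|U_(K+1)|) = 0`). -/
noncomputable def du {K : ℕ} (U : Fin K → ℝ) (σ : Equiv.Perm (Fin K)) (s : ℕ) : ℝ :=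
  if h : s - 1 < K then |U (σ ⟨s - 1, h⟩)| else 0

/-- `a_s = λ − M·Σ_{i=1}^s (|U_(i)| − λ̄)`. -/
noncomputable def aseq {K : ℕ} (U : Fin K → ℝ) (σ : Equiv.Perm (Fin K))
    (lam lamb M : ℝ) (s : ℕ) : ℝ :=
  lam - M * ∑ i ∈ Finset.Icc 1 s, (du U σ i - lamb)

/-- `F_s(b) = ½(1+sM²)·‖b − v/(1+sM²)‖₂² + a_s·‖b‖₂`. -/
noncomputable def Fsfun {k K : ℕ} (U : Fin K → ℝ) (σ : Equiv.Perm (Fin K))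
    (lam lamb M : ℝ) (v : Fin k → ℝ) (s : ℕ) (b : Fin k → ℝ) : ℝ :=
  (1 / 2) * (1 + (s : ℝ) * M ^ 2) * ∑ i, (b i - v i / (1 + (s : ℝ) * M ^ 2)) ^ 2
    + aseq U σ lam lamb M s * l2 b

/-- `W(b)_j = sign(U_j)·min{M‖b‖₂, S_λ̄(|U_j|)}`. -/
noncomputable def Wmap {k K : ℕ} (lamb M : ℝ) (U : Fin K → ℝ) (b : Fin k → ℝ) :
    Fin K → ℝ :=
  fun j => Real.sign (U j) * min (M * l2 b) (st lamb (abs (U j)))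

/-- `F(b) = ½‖v − b‖₂² + ½‖U − W(b)‖₂² + λ‖b‖₂ + λ̄‖W(b)‖₁`. -/
noncomputable def Ffun {k K : ℕ} (lam lamb M : ℝ) (v : Fin k → ℝ) (U : Fin K → ℝ)
    (b : Fin k → ℝ) : ℝ :=
  (1 / 2) * ∑ i, (v i - b i) ^ 2
    + (1 / 2) * ∑ j, (U j - Wmap lamb M U b j) ^ 2
    + lam * l2 b + lamb * l1 (Wmap lamb M U b)

lemma st_of_nonneg' {lamb x : ℝ} (hl : 0 ≤ lamb) (hx : 0 ≤ x) :
    st lamb x = max (x - lamb) 0 := by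
  rcases eq_or_lt_of_le hx with h | h
  · simp [st, ← h, Real.sign_zero, max_eq_right (by linarith : x - lamb ≤ 0), hl]
  · simp [st, Real.sign_of_pos h, abs_of_pos h]

lemma st_mono' {lamb x y : ℝ} (hl : 0 ≤ lamb) (hx : 0 ≤ x) (hxy : x ≤ y) :
    st lamb x ≤ st lamb y := by
  rw [st_of_nonneg' hl hx, st_of_nonneg' hl (hx.trans hxy)]
  exact max_le_max (by linarith) le_rfl

lemma sum_Icc_one' (f : ℕ → ℝ) (s : ℕ) :
    ∑ i ∈ Finset.Icc 1 s, f i = ∑ i ∈ Finset.range s, f (i + 1) := by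
  induction s with
  | zero => simp
  | succ n ih =>
    rw [Finset.sum_Icc_succ_top (by omega), ih, Finset.sum_range_succ]

/-- `Tf U σ j = |U_(j+1)|` (0-based), with out-of-range convention 0. -/
noncomputable def Tf {K : ℕ} (U : Fin K → ℝ) (σ : Equiv.Perm (Fin K)) (j : ℕ) : ℝ :=
  if h : j < K then |U (σ ⟨j, h⟩)| else 0

lemma key_const (k K : ℕ) (lam lamb M : ℝ) (hlamb : 0 ≤ lamb) (hM : 0 < M)
    (v : Fin k → ℝ) (U : Fin K → ℝ) (σ : Equiv.Perm (Fin K))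
    (hsort : ∀ i j : Fin K, i ≤ j → |U (σ j)| ≤ |U (σ i)|)
    (s : ℕ) (hs : s ≤ K) (b : Fin k → ℝ)
    (h1 : st lamb (du U σ (s + 1)) ≤ M * l2 b)
    (h2 : 0 < s → M * l2 b < st lamb (du U σ s)) :
    Ffun lam lamb M v U b - Fsfun U σ lam lamb M v s b
      = (1/2) * (∑ i, (v i)^2) - (1/2) * (∑ i, (v i)^2) / (1 + (s:ℝ) * M^2)
        + ∑ i : Fin K, (if (i : ℕ) < s then (1/2) * (U (σ i))^2
            else (1/2) * (U (σ i) - Real.sign (U (σ i)) * st lamb (|U (σ i)|))^2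
              + lamb * |Real.sign (U (σ i)) * st lamb (|U (σ i)|)|) := by
  have hnn : (0:ℝ) ≤ l2 b := Real.sqrt_nonneg _
  have hr0 : (0:ℝ) ≤ M * l2 b := mul_nonneg hM.le hnn
  have hc : (0:ℝ) < 1 + (s:ℝ) * M^2 := by positivity
  -- min analysis
  have hlt : ∀ i : Fin K, (i:ℕ) < s → M * l2 b < st lamb (|U (σ i)|) := by
    intro i hi
    have h2' := h2 (by omega)
    have hsK : s - 1 < K := by omega
    have hdu : du U σ s = |U (σ ⟨s-1, hsK⟩)| := dif_pos hsK
    rw [hdu] at h2'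
    refine lt_of_lt_of_le h2' (st_mono' hlamb (abs_nonneg _) ?_)
    exact hsort i ⟨s-1, hsK⟩ (by simp [Fin.le_def]; omega)
  have hge : ∀ i : Fin K, s ≤ (i:ℕ) → st lamb (|U (σ i)|) ≤ M * l2 b := by
    intro i hi
    have hsK : s < K := lt_of_le_of_lt hi i.isLt
    have hdu : du U σ (s+1) = |U (σ ⟨s, hsK⟩)| := dif_pos (by omega)
    calc st lamb (|U (σ i)|) ≤ st lamb (|U (σ ⟨s, hsK⟩)|) :=
          st_mono' hlamb (abs_nonneg _)
            (hsort ⟨s, hsK⟩ i (by simp [Fin.le_def]; omega))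
      _ ≤ M * l2 b := by rw [← hdu]; exact h1
  have hW : ∀ i : Fin K, Wmap lamb M U b (σ i)
      = Real.sign (U (σ i)) * (if (i:ℕ) < s then M * l2 b else st lamb (|U (σ i)|)) := by
    intro i
    rw [Wmap]
    congr 1
    by_cases hi : (i:ℕ) < s
    · rw [if_pos hi]; exact min_eq_left (le_of_lt (hlt i hi))
    · rw [if_neg hi]; exact min_eq_right (hge i (le_of_not_gt hi))
  -- per-term identity
  have hterm : ∀ i : Fin K,
      (1/2) * (U (σ i) - Wmap lamb M U b (σ i))^2 + lamb * |Wmap lamb M U b (σ i)|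
      = (if (i:ℕ) < s then (1/2) * (U (σ i))^2
          else (1/2) * (U (σ i) - Real.sign (U (σ i)) * st lamb (|U (σ i)|))^2
            + lamb * |Real.sign (U (σ i)) * st lamb (|U (σ i)|)|)
        + (if (i:ℕ) < s then (lamb - |U (σ i)|) * (M * l2 b) + (1/2)*(M * l2 b)^2 else 0) := by
    intro i
    rw [hW i]
    by_cases hi : (i:ℕ) < s
    · rw [if_pos hi, if_pos hi, if_pos hi]
      have hgt : lamb < |U (σ i)| := by
        have h' := hlt i hi
        rw [st_of_nonneg' hlamb (abs_nonneg _)] at h'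
        by_contra hcon
        push_neg at hcon
        rw [max_eq_right (by linarith)] at h'
        linarith
      have hne : U (σ i) ≠ 0 := by
        intro h0
        rw [h0] at hgt
        simp at hgt
        linarith
      rcases hne.lt_or_gt with hneg | hpos
      · rw [Real.sign_of_neg hneg, abs_of_neg hneg, neg_one_mul, abs_neg,
          abs_of_nonneg hr0]
        ring
      · rw [Real.sign_of_pos hpos, abs_of_pos hpos, one_mul, abs_of_nonneg hr0]
        ring
    · rw [if_neg hi, if_neg hi, if_neg hi, add_zero]
  have eT : ∀ i : Fin K, |U (σ i)| = Tf U σ (i:ℕ) := by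
    intro i
    simp [Tf, i.isLt]
  -- the variable part of the sum
  have hsum2 : ∑ i : Fin K,
      (if (i:ℕ) < s then (lamb - |U (σ i)|) * (M * l2 b) + (1/2)*(M * l2 b)^2 else 0)
      = -(∑ j ∈ Finset.range s, (Tf U σ j - lamb)) * (M * l2 b)
        + (s:ℝ) * ((1/2)*(M * l2 b)^2) := by
    have hneg : ∑ j ∈ Finset.range s, (lamb - Tf U σ j)
        = -∑ j ∈ Finset.range s, (Tf U σ j - lamb) := by
      rw [← Finset.sum_neg_distrib]
      exact Finset.sum_congr rfl fun j _ => by ring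
    calc ∑ i : Fin K,
        (if (i:ℕ) < s then (lamb - |U (σ i)|) * (M * l2 b) + (1/2)*(M * l2 b)^2 else 0)
        = ∑ j ∈ Finset.range K, (if j < s then
            (lamb - Tf U σ j) * (M * l2 b) + (1/2)*(M * l2 b)^2 else 0) := by
          rw [← Fin.sum_univ_eq_sum_range]
          exact Finset.sum_congr rfl fun i _ => by simp only [eT i]
      _ = ∑ j ∈ Finset.range s, (if j < s then
            (lamb - Tf U σ j) * (M * l2 b) + (1/2)*(M * l2 b)^2 else 0) :=
          (Finset.sum_subset (Finset.range_subset_range.mpr hs)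
            (fun x _ hx => if_neg (fun hxs => hx (Finset.mem_range.mpr hxs)))).symm
      _ = ∑ j ∈ Finset.range s,
            ((lamb - Tf U σ j) * (M * l2 b) + (1/2)*(M * l2 b)^2) :=
          Finset.sum_congr rfl fun j hj => if_pos (Finset.mem_range.mp hj)
      _ = -(∑ j ∈ Finset.range s, (Tf U σ j - lamb)) * (M * l2 b)
            + (s:ℝ) * ((1/2)*(M * l2 b)^2) := by
          rw [Finset.sum_add_distrib, ← Finset.sum_mul, Finset.sum_const,
            Finset.card_range, nsmul_eq_mul, hneg]
  have haseq : aseq U σ lam lamb M s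
      = lam - M * (∑ j ∈ Finset.range s, (Tf U σ j - lamb)) := by
    rw [aseq]
    have heq : ∑ i ∈ Finset.Icc 1 s, (du U σ i - lamb)
        = ∑ j ∈ Finset.range s, (Tf U σ j - lamb) := by
      rw [sum_Icc_one' (fun i => du U σ i - lamb) s]
      exact Finset.sum_congr rfl fun j _ => rfl
    rw [heq]
  -- sums over j via σ
  have e1 : ∑ j, (U j - Wmap lamb M U b j)^2
      = ∑ i, (U (σ i) - Wmap lamb M U b (σ i))^2 :=
    (Equiv.sum_comp σ (fun j => (U j - Wmap lamb M U b j)^2)).symm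
  have e2 : l1 (Wmap lamb M U b) = ∑ i, |Wmap lamb M U b (σ i)| := by
    rw [l1]
    exact (Equiv.sum_comp σ (fun j => |Wmap lamb M U b j|)).symm
  have hUW : (1/2) * (∑ j, (U j - Wmap lamb M U b j)^2) + lamb * l1 (Wmap lamb M U b)
      = (∑ i : Fin K, (if (i : ℕ) < s then (1/2) * (U (σ i))^2
            else (1/2) * (U (σ i) - Real.sign (U (σ i)) * st lamb (|U (σ i)|))^2
              + lamb * |Real.sign (U (σ i)) * st lamb (|U (σ i)|)|))
        + (-(∑ j ∈ Finset.range s, (Tf U σ j - lamb)) * (M * l2 b)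
            + (s:ℝ) * ((1/2)*(M * l2 b)^2)) := by
    rw [e1, e2, Finset.mul_sum, Finset.mul_sum, ← Finset.sum_add_distrib]
    rw [Finset.sum_congr rfl fun i _ => hterm i, Finset.sum_add_distrib, hsum2]
  -- expansions of quadratic sums
  have hvb : ∑ i, (v i - b i)^2
      = (∑ i, (v i)^2) - 2*(∑ i, v i * b i) + (∑ i, (b i)^2) := by
    have h : ∀ i : Fin k, (v i - b i)^2 = (v i)^2 - 2*(v i * b i) + (b i)^2 :=
      fun i => by ring
    simp only [h]
    rw [Finset.sum_add_distrib, Finset.sum_sub_distrib, Finset.mul_sum]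
  have hbv : ∑ i, (b i - v i / (1 + (s:ℝ)*M^2))^2
      = (∑ i, (b i)^2) - 2*(∑ i, v i * b i)/(1 + (s:ℝ)*M^2)
        + (∑ i, (v i)^2)/(1 + (s:ℝ)*M^2)^2 := by
    have h : ∀ i : Fin k, (b i - v i / (1 + (s:ℝ)*M^2))^2
        = (b i)^2 - 2*(v i * b i)/(1 + (s:ℝ)*M^2) + (v i)^2/(1 + (s:ℝ)*M^2)^2 :=
      fun i => by field_simp; ring
    simp only [h]
    rw [Finset.sum_add_distrib, Finset.sum_sub_distrib, ← Finset.sum_div,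
      ← Finset.sum_div, ← Finset.mul_sum]
  have hFsplit : Ffun lam lamb M v U b
      = (1/2) * (∑ i, (v i - b i)^2) + lam * l2 b
        + ((1/2) * (∑ j, (U j - Wmap lamb M U b j)^2) + lamb * l1 (Wmap lamb M U b)) := by
    rw [Ffun]; ring
  have hnsq : (l2 b)^2 = ∑ i, (b i)^2 := Real.sq_sqrt (by positivity)
  rw [hFsplit, hUW, hvb, Fsfun, hbv, haseq, ← hnsq]
  field_simp
  ring

/-- Fix `s ∈ {0,…,K}`. For any `b, b'` with `M‖b‖₂` and `M‖b'‖₂` both in the shell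
`[S_λ̄(|U_(s+1)|), S_λ̄(|U_(s)|))` (upper bound `+∞` when `s = 0`),
`F(b) − F_s(b) = F(b') − F_s(b')`. -/
theorem stmt11 (k K : ℕ) (hk : 1 ≤ k) (hK : 1 ≤ K)
    (lam lamb M : ℝ) (hlam : 0 ≤ lam) (hlamb : 0 ≤ lamb) (hM : 0 < M)
    (v : Fin k → ℝ) (U : Fin K → ℝ)
    (σ : Equiv.Perm (Fin K))
    (hsort : ∀ i j : Fin K, i ≤ j → |U (σ j)| ≤ |U (σ i)|)
    (s : ℕ) (hs : s ≤ K) :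
    ∀ b b' : Fin k → ℝ,
      (st lamb (du U σ (s + 1)) ≤ M * l2 b ∧
        (0 < s → M * l2 b < st lamb (du U σ s))) →
      (st lamb (du U σ (s + 1)) ≤ M * l2 b' ∧
        (0 < s → M * l2 b' < st lamb (du U σ s))) →
      Ffun lam lamb M v U b - Fsfun U σ lam lamb M v s b
        = Ffun lam lamb M v U b' - Fsfun U σ lam lamb M v s b' := by
  intro b b' hb hb'
  rw [key_const k K lam lamb M hlamb hM v U σ hsort s hs b hb.1 hb.2,
    key_const k K lam lamb M hlamb hM v U σ hsort s hs b' hb'.1 hb'.2]
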